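/- Let L be a simple line arrangement of n ≥ 3 lines and let u, v be two distinct vertices of G_L lying on a common line l ∈ L. Then there is a unique shortest u,v-path in G_L, all of its vertices lie on l, and its length equals one plus the number of vertices of V(L) that lie strictly between u and v on l. -/

import Mathlib

/-!
For a line `m` with affine equation `f_m = 0` put `sideDist (x, y) = |sign f_m x - sign f_m y|`,
and let `separation x y` be the sum of these over all lines of the arrangement. An edge lies on
one line, no other line strictly separates its endpoints, and each endpoint lies on only one other
line, so `separation` grows by at most `2` along an edge. For `u`, `v` on `l` with `k` vertices
strictly between them, the `k` lines through those vertices contribute `2` each and the second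
lines through `u` and `v` contribute `1` each, so every `u,v`-walk has length at least `k + 1`;
a walk through a point off `l` pays `2` more, for `l` itself. Walking along `l` realises `k + 1`,
so `d(u, v) = k + 1` and shortest walks stay on `l`. They are unique because the first step must
go to the neighbour of `u` on `l` in the direction of `v`.
-/

/-- A line in the Euclidean plane `ℝ × ℝ`, given by an affine equation. -/
def IsLine (l : Set (ℝ × ℝ)) : Prop :=
  ∃ a b c : ℝ, (a, b) ≠ (0, 0) ∧ l = {p : ℝ × ℝ | a * p.1 + b * p.2 = c}

/-- A simple line arrangement of `n` lines in the Euclidean plane: `n` distinct lines,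
every two of which meet in exactly one point, and no point lies on three of the lines. -/
structure SimpleLineArrangement (n : ℕ) where
  lines : Finset (Set (ℝ × ℝ))
  card_lines : lines.card = n
  isLine : ∀ l ∈ lines, IsLine l
  meet : ∀ l₁ ∈ lines, ∀ l₂ ∈ lines, l₁ ≠ l₂ → ∃! p : ℝ × ℝ, p ∈ l₁ ∩ l₂
  simple : ∀ p : ℝ × ℝ, ∀ l₁ ∈ lines, ∀ l₂ ∈ lines, ∀ l₃ ∈ lines,
    p ∈ l₁ → p ∈ l₂ → p ∈ l₃ → l₁ = l₂ ∨ l₁ = l₃ ∨ l₂ = l₃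

namespace SimpleLineArrangement

variable {n : ℕ}

/-- The vertex set of the arrangement: all intersection points of pairs of lines. -/
def verts (A : SimpleLineArrangement n) : Set (ℝ × ℝ) :=
  {p | ∃ l₁ ∈ A.lines, ∃ l₂ ∈ A.lines, l₁ ≠ l₂ ∧ p ∈ l₁ ∧ p ∈ l₂}

/-- The arrangement graph: two distinct vertices are adjacent iff some line of the
arrangement contains both and no other vertex lies strictly between them on that line. -/
def graph (A : SimpleLineArrangement n) : SimpleGraph (ℝ × ℝ) where
  Adj u v := u ≠ v ∧ u ∈ A.verts ∧ v ∈ A.verts ∧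
    ∃ l ∈ A.lines, u ∈ l ∧ v ∈ l ∧ ∀ w ∈ A.verts, w ∈ l → ¬ Sbtw ℝ u w v
  symm := by
    constructor
    rintro u v ⟨huv, hu, hv, l, hl, hul, hvl, hbet⟩
    exact ⟨huv.symm, hv, hu, l, hl, hvl, hul, fun w hw hwl hb => hbet w hw hwl hb.symm⟩
  loopless := by constructor; rintro u ⟨h, -⟩; exact h rfl

/-- The degree of a vertex in the arrangement graph. -/
noncomputable def deg (A : SimpleLineArrangement n) (v : ℝ × ℝ) : ℕ :=
  {w | A.graph.Adj v w}.ncard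

/-- The number of vertices of the arrangement graph having degree `i`. -/
noncomputable def degCount (A : SimpleLineArrangement n) (i : ℕ) : ℕ :=
  {v | v ∈ A.verts ∧ A.deg v = i}.ncard

/-- The eccentricity of a vertex: the maximum graph distance to a vertex. -/
noncomputable def ecc (A : SimpleLineArrangement n) (u : ℝ × ℝ) : ℕ :=
  sSup ((fun v => A.graph.dist u v) '' A.verts)

/-- The realization `R(L)`: the union of the closed segments joining adjacent vertices. -/
def realization (A : SimpleLineArrangement n) : Set (ℝ × ℝ) :=
  ⋃ (u : ℝ × ℝ) (v : ℝ × ℝ) (_ : A.graph.Adj u v), segment ℝ u v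

/-- A point lies on the outer face of the realization if it belongs to the closure of
the unbounded connected component of the complement of the realization. -/
def OnOuterFace (A : SimpleLineArrangement n) (p : ℝ × ℝ) : Prop :=
  ∃ q : ℝ × ℝ, q ∉ A.realization ∧
    ¬ Bornology.IsBounded (connectedComponentIn (A.realization)ᶜ q) ∧
    p ∈ closure (connectedComponentIn (A.realization)ᶜ q)

end SimpleLineArrangement

open SignType (sign)

section SideDist

variable {V P : Type*} [AddCommGroup V] [Module ℝ V] [AddTorsor V P] (f : P →ᵃ[ℝ] ℝ)
  {x y z w : P}

noncomputable def sideDist (x y : P) : ℤ := |(sign (f x) : ℤ) - sign (f y)|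

@[simp] lemma sideDist_self : sideDist f x x = 0 := by simp [sideDist]

lemma sideDist_comm : sideDist f x y = sideDist f y x := abs_sub_comm _ _

lemma sideDist_nonneg : 0 ≤ sideDist f x y := abs_nonneg _

lemma sideDist_triangle : sideDist f x z ≤ sideDist f x y + sideDist f y z := abs_sub_le _ _ _

lemma sideDist_le_one (hx : f x = 0) : sideDist f x y ≤ 1 := by
  rcases lt_trichotomy (f y) 0 with h | h | h <;> simp [sideDist, hx, h, sign_neg, sign_pos]

lemma sideDist_eq_one (hx : f x = 0) (hy : f y ≠ 0) : sideDist f x y = 1 := by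
  rcases hy.lt_or_gt with h | h <;> simp [sideDist, hx, h, sign_neg, sign_pos]

lemma sideDist_eq_two_of_sbtw (h : Sbtw ℝ x w y) (hw : f w = 0) (hx : f x ≠ 0) :
    sideDist f x y = 2 := by
  obtain ⟨⟨t, ⟨ht₀, ht₁⟩, rfl⟩, -, hwy⟩ := h
  have ht : 0 < 1 - t := sub_pos.2 <| ht₁.lt_of_ne <| by rintro rfl; simp at hwy
  rw [AffineMap.apply_lineMap, AffineMap.lineMap_apply_ring'] at hw
  rcases hx.lt_or_gt with hx | hx
  · have hy : 0 < f y := by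
      by_contra! hy
      nlinarith [mul_nonpos_of_nonneg_of_nonpos ht₀ hy, mul_neg_of_pos_of_neg ht hx]
    simp [sideDist, hx, hy, sign_neg, sign_pos]
  · have hy : f y < 0 := by
      by_contra! hy
      nlinarith [mul_nonneg ht₀ hy, mul_pos ht hx]
    simp [sideDist, hx, hy, sign_neg, sign_pos]

lemma exists_sbtw_eq_zero (h : f x * f y < 0) : ∃ w, Sbtw ℝ x w y ∧ f w = 0 := by
  have hxy : f x - f y ≠ 0 := by
    intro h'
    rw [sub_eq_zero.1 h'] at h
    exact (mul_self_nonneg _).not_gt h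
  have hne : x ≠ y := by
    rintro rfl
    exact hxy (sub_self _)
  refine ⟨AffineMap.lineMap x y (f x / (f x - f y)), sbtw_lineMap_iff.2 ⟨hne, ?_⟩, ?_⟩
  · rcases mul_neg_iff.1 h with ⟨hx, hy⟩ | ⟨hx, hy⟩
    · exact ⟨div_pos hx (by linarith), (div_lt_one (by linarith)).2 (by linarith)⟩
    · exact ⟨div_pos_of_neg_of_neg hx (by linarith),
        (div_lt_one_of_neg (by linarith)).2 (by linarith)⟩
  · rw [AffineMap.apply_lineMap, AffineMap.lineMap_apply_ring']
    field_simp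
    ring

lemma sideDist_eq_zero_of_forall_sbtw (hx : f x ≠ 0) (hy : f y ≠ 0)
    (h : ∀ w, Sbtw ℝ x w y → f w ≠ 0) : sideDist f x y = 0 := by
  have : ¬ f x * f y < 0 := fun hxy => by
    obtain ⟨w, hw, hw0⟩ := exists_sbtw_eq_zero f hxy
    exact h w hw hw0
  rcases hx.lt_or_gt with hx | hx <;> rcases hy.lt_or_gt with hy | hy <;>
    simp [sideDist, hx, hy, sign_neg, sign_pos] <;> exact this (by nlinarith)

lemma Wbtw.apply_eq_zero (h : Wbtw ℝ x w y) (hx : f x = 0) (hy : f y = 0) : f w = 0 := by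
  obtain ⟨t, -, rfl⟩ := h
  simp [AffineMap.apply_lineMap, hx, hy]

end SideDist

section Lines

variable {l : Set (ℝ × ℝ)}

lemma IsLine.exists_affineMap (h : IsLine l) :
    ∃ f : ℝ × ℝ →ᵃ[ℝ] ℝ, ∀ p, p ∈ l ↔ f p = 0 := by
  obtain ⟨a, b, c, -, rfl⟩ := h
  refine ⟨(a • LinearMap.fst ℝ ℝ ℝ + b • LinearMap.snd ℝ ℝ ℝ).toAffineMap -
    AffineMap.const ℝ _ c, fun p => ?_⟩
  simp [sub_eq_zero]

noncomputable def lineFun (l : Set (ℝ × ℝ)) : ℝ × ℝ →ᵃ[ℝ] ℝ :=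
  Classical.epsilon fun f : ℝ × ℝ →ᵃ[ℝ] ℝ => ∀ p, p ∈ l ↔ f p = 0

lemma IsLine.mem_iff_lineFun_eq_zero (h : IsLine l) {p : ℝ × ℝ} : p ∈ l ↔ lineFun l p = 0 :=
  Classical.epsilon_spec h.exists_affineMap p

lemma IsLine.collinear (h : IsLine l) : Collinear ℝ l := by
  obtain ⟨a, b, c, hab, rfl⟩ := h
  rcases Set.eq_empty_or_nonempty {p : ℝ × ℝ | a * p.1 + b * p.2 = c} with he | ⟨p₀, hp₀⟩
  · rw [he]
    exact collinear_empty ℝ (ℝ × ℝ)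
  have hK : a ^ 2 + b ^ 2 ≠ 0 := by
    contrapose! hab
    obtain ⟨ha, hb⟩ := (add_eq_zero_iff_of_nonneg (sq_nonneg a) (sq_nonneg b)).1 hab
    simp_all
  refine (collinear_iff_of_mem hp₀).2 ⟨(-b, a), fun p hp =>
    ⟨(a * (p.2 - p₀.2) - b * (p.1 - p₀.1)) / (a ^ 2 + b ^ 2), ?_⟩⟩
  simp only [Set.mem_ofPred_eq] at hp hp₀
  ext <;> simp <;> field_simp
  · linear_combination a * hp - a * hp₀
  · linear_combination b * hp - b * hp₀

lemma IsLine.wbtw_or_wbtw_or_wbtw (h : IsLine l) {x y z : ℝ × ℝ} (hx : x ∈ l) (hy : y ∈ l)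
    (hz : z ∈ l) : Wbtw ℝ x y z ∨ Wbtw ℝ y z x ∨ Wbtw ℝ z x y :=
  (h.collinear.subset (by simp [Set.insert_subset_iff, hx, hy, hz])).wbtw_or_wbtw_or_wbtw

end Lines

namespace SimpleLineArrangement

variable {n : ℕ} (A : SimpleLineArrangement n) {l m : Set (ℝ × ℝ)} {p q u v w x y z : ℝ × ℝ}

lemma mem_iff_lineFun_eq_zero (hm : m ∈ A.lines) : p ∈ m ↔ lineFun m p = 0 :=
  (A.isLine m hm).mem_iff_lineFun_eq_zero

lemma eq_of_mem_of_mem (hl : l ∈ A.lines) (hm : m ∈ A.lines) (hlm : l ≠ m) (hpl : p ∈ l)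
    (hpm : p ∈ m) (hql : q ∈ l) (hqm : q ∈ m) : p = q :=
  (A.meet l hl m hm hlm).unique ⟨hpl, hpm⟩ ⟨hql, hqm⟩

lemma line_eq_of_mem_of_mem (hl : l ∈ A.lines) (hpl : p ∈ l) {m₁ m₂ : Set (ℝ × ℝ)}
    (hm₁ : m₁ ∈ A.lines) (hm₂ : m₂ ∈ A.lines) (h₁ : m₁ ≠ l) (h₂ : m₂ ≠ l) (hp₁ : p ∈ m₁)
    (hp₂ : p ∈ m₂) : m₁ = m₂ := by
  rcases A.simple p l hl m₁ hm₁ m₂ hm₂ hpl hp₁ hp₂ with h | h | h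
  · exact absurd h.symm h₁
  · exact absurd h.symm h₂
  · exact h

lemma exists_line_ne (hp : p ∈ A.verts) (l : Set (ℝ × ℝ)) :
    ∃ m ∈ A.lines, m ≠ l ∧ p ∈ m := by
  obtain ⟨m₁, hm₁, m₂, hm₂, hne, hp₁, hp₂⟩ := hp
  by_cases h : m₁ = l
  · exact ⟨m₂, hm₂, fun h' => hne (h.trans h'.symm), hp₂⟩
  · exact ⟨m₁, hm₁, h, hp₁⟩

lemma finite_verts : A.verts.Finite := by
  refine Set.Finite.subset (s := ⋃ m₁ ∈ (A.lines : Set (Set (ℝ × ℝ))),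
      ⋃ m₂ ∈ ((A.lines.erase m₁ : Finset _) : Set (Set (ℝ × ℝ))), m₁ ∩ m₂)
    (A.lines.finite_toSet.biUnion fun m₁ hm₁ => (Finset.finite_toSet _).biUnion fun m₂ hm₂ =>
      Set.Subsingleton.finite fun p hp q hq => A.eq_of_mem_of_mem hm₁ (Finset.mem_of_mem_erase hm₂)
        (Finset.ne_of_mem_erase hm₂).symm hp.1 hp.2 hq.1 hq.2) ?_
  rintro p ⟨m₁, hm₁, m₂, hm₂, hne, h₁, h₂⟩
  exact Set.mem_biUnion (Finset.mem_coe.2 hm₁)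
    (Set.mem_biUnion (Finset.mem_coe.2 (Finset.mem_erase.2 ⟨hne.symm, hm₂⟩)) ⟨h₁, h₂⟩)

def vertsBetween (l : Set (ℝ × ℝ)) (u v : ℝ × ℝ) : Set (ℝ × ℝ) :=
  {w | w ∈ A.verts ∧ w ∈ l ∧ Sbtw ℝ u w v}

lemma finite_vertsBetween : (A.vertsBetween l u v).Finite :=
  A.finite_verts.subset fun _ hw => hw.1

lemma adj_iff_vertsBetween_eq_empty (hl : l ∈ A.lines) (hul : u ∈ l) (hvl : v ∈ l) :
    A.graph.Adj u v ↔ u ≠ v ∧ u ∈ A.verts ∧ v ∈ A.verts ∧ A.vertsBetween l u v = ∅ := by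
  simp only [Set.eq_empty_iff_forall_notMem, vertsBetween, Set.mem_ofPred_eq, not_and]
  constructor
  · rintro ⟨huv, hu, hv, m, hm, hum, hvm, h⟩
    obtain rfl : m = l := by
      by_contra hml
      exact huv (A.eq_of_mem_of_mem hm hl hml hum hul hvm hvl)
    exact ⟨huv, hu, hv, h⟩
  · rintro ⟨huv, hu, hv, h⟩
    exact ⟨huv, hu, hv, l, hl, hul, hvl, h⟩

noncomputable def separation (x y : ℝ × ℝ) : ℤ :=
  ∑ m ∈ A.lines, sideDist (lineFun m) x y

lemma separation_triangle : A.separation x z ≤ A.separation x y + A.separation y z := by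
  rw [separation, separation, separation, ← Finset.sum_add_distrib]
  exact Finset.sum_le_sum fun m _ => sideDist_triangle _

lemma sideDist_eq_zero_of_adj (h : A.graph.Adj x y) (hm : m ∈ A.lines) (hxm : x ∉ m)
    (hym : y ∉ m) : sideDist (lineFun m) x y = 0 := by
  obtain ⟨-, -, -, m₀, hm₀, hxm₀, hym₀, hbtw⟩ := h
  have hmm₀ : m ≠ m₀ := by
    rintro rfl
    exact hxm hxm₀
  -- a zero of `lineFun m` strictly between `x` and `y` would be a vertex between them on `m₀`
  refine sideDist_eq_zero_of_forall_sbtw _ (mt (A.mem_iff_lineFun_eq_zero hm).2 hxm)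
    (mt (A.mem_iff_lineFun_eq_zero hm).2 hym) fun w hw hw0 => ?_
  have hwm₀ := (A.mem_iff_lineFun_eq_zero hm₀).2 <| hw.wbtw.apply_eq_zero _
    ((A.mem_iff_lineFun_eq_zero hm₀).1 hxm₀) ((A.mem_iff_lineFun_eq_zero hm₀).1 hym₀)
  exact hbtw w ⟨m, hm, m₀, hm₀, hmm₀, (A.mem_iff_lineFun_eq_zero hm).2 hw0, hwm₀⟩ hwm₀ hw

lemma separation_le_two_of_adj (h : A.graph.Adj x y) : A.separation x y ≤ 2 := by
  classical
  obtain ⟨m₀, hm₀, hxm₀, hym₀, -⟩ := h.2.2.2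
  obtain ⟨mx, hmx, hmx₀, hxmx⟩ := A.exists_line_ne h.2.1 m₀
  obtain ⟨my, hmy, hmy₀, hymy⟩ := A.exists_line_ne h.2.2.1 m₀
  have key : ∀ m ∈ A.lines, sideDist (lineFun m) x y ≤
      (if mx = m then 1 else 0) + (if my = m then 1 else 0) := by
    intro m hm
    have hf := fun p => A.mem_iff_lineFun_eq_zero (p := p) hm
    by_cases hmm₀ : m = m₀
    · subst hmm₀
      simp only [sideDist, (hf x).1 hxm₀, (hf y).1 hym₀, sign_zero, sub_self, abs_zero]
      positivity
    by_cases hxm : x ∈ m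
    · rw [if_pos (A.line_eq_of_mem_of_mem hm₀ hxm₀ hmx hm hmx₀ hmm₀ hxmx hxm)]
      linarith [sideDist_le_one (lineFun m) ((hf x).1 hxm) (y := y),
        show (0 : ℤ) ≤ if my = m then 1 else 0 by positivity]
    by_cases hym : y ∈ m
    · rw [if_pos (A.line_eq_of_mem_of_mem hm₀ hym₀ hmy hm hmy₀ hmm₀ hymy hym), sideDist_comm]
      linarith [sideDist_le_one (lineFun m) ((hf y).1 hym) (y := x),
        show (0 : ℤ) ≤ if mx = m then 1 else 0 by positivity]
    rw [A.sideDist_eq_zero_of_adj h hm hxm hym]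
    positivity
  calc A.separation x y
      ≤ ∑ m ∈ A.lines, ((if mx = m then 1 else 0) + (if my = m then 1 else 0)) :=
        Finset.sum_le_sum key
    _ = 2 := by
        rw [Finset.sum_add_distrib, Finset.sum_ite_eq, Finset.sum_ite_eq, if_pos hmx, if_pos hmy]
        rfl

lemma separation_le_two_mul_length (W : A.graph.Walk x y) :
    A.separation x y ≤ 2 * W.length := by
  induction W with
  | nil => simp [separation]
  | @cons a b c h W ih =>
    rw [SimpleGraph.Walk.length_cons, Nat.cast_succ]
    linarith [A.separation_triangle (x := a) (y := b) (z := c), A.separation_le_two_of_adj h]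

lemma sideDist_eq_one_of_mem (hl : l ∈ A.lines) (hm : m ∈ A.lines) (hml : m ≠ l) (hum : u ∈ m)
    (hul : u ∈ l) (hvl : v ∈ l) (huv : u ≠ v) : sideDist (lineFun m) u v = 1 :=
  sideDist_eq_one _ ((A.mem_iff_lineFun_eq_zero hm).1 hum) fun h0 =>
    huv (A.eq_of_mem_of_mem hm hl hml hum hul ((A.mem_iff_lineFun_eq_zero hm).2 h0) hvl)

lemma sideDist_eq_two_of_mem (hl : l ∈ A.lines) (hm : m ∈ A.lines) (hml : m ≠ l) (hwm : w ∈ m)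
    (hwl : w ∈ l) (hul : u ∈ l) (h : Sbtw ℝ u w v) : sideDist (lineFun m) u v = 2 :=
  sideDist_eq_two_of_sbtw _ h ((A.mem_iff_lineFun_eq_zero hm).1 hwm) fun h0 =>
    h.left_ne (A.eq_of_mem_of_mem hm hl hml ((A.mem_iff_lineFun_eq_zero hm).2 h0) hul hwm hwl)

lemma two_mul_ncard_add_two_le_separation (hl : l ∈ A.lines) (hu : u ∈ A.verts)
    (hv : v ∈ A.verts) (huv : u ≠ v) (hul : u ∈ l) (hvl : v ∈ l) :
    2 * (A.vertsBetween l u v).ncard + 2 ≤ A.separation u v := by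
  classical
  choose! o ho using fun w (hw : w ∈ A.verts) => A.exists_line_ne hw l
  have hfin := A.finite_vertsBetween (l := l) (u := u) (v := v)
  have hB : ∀ w ∈ hfin.toFinset, w ∈ A.verts ∧ w ∈ l ∧ Sbtw ℝ u w v := fun w hw =>
    hfin.mem_toFinset.1 hw
  have hvB : v ∉ hfin.toFinset := fun h => (hB v h).2.2.ne_right rfl
  have huB : u ∉ insert v hfin.toFinset := by
    rw [Finset.mem_insert, not_or]
    exact ⟨huv, fun h => (hB u h).2.2.ne_left rfl⟩
  set S := insert u (insert v hfin.toFinset)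
  have hS : ∀ w ∈ S, w ∈ A.verts ∧ w ∈ l := by
    simp only [S, Finset.mem_insert]
    rintro w (rfl | rfl | hw)
    exacts [⟨hu, hul⟩, ⟨hv, hvl⟩, ⟨(hB w hw).1, (hB w hw).2.1⟩]
  have hinj : Set.InjOn o S := fun w₁ h₁ w₂ h₂ he =>
    have ho₂ := ho w₂ (hS w₂ h₂).1
    A.eq_of_mem_of_mem hl ho₂.1 ho₂.2.1.symm (hS w₁ h₁).2 (he ▸ (ho w₁ (hS w₁ h₁).1).2.2)
      (hS w₂ h₂).2 ho₂.2.2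
  have hsB : ∀ w ∈ hfin.toFinset, sideDist (lineFun (o w)) u v = 2 := fun w hw =>
    A.sideDist_eq_two_of_mem hl (ho w (hB w hw).1).1 (ho w (hB w hw).1).2.1
      (ho w (hB w hw).1).2.2 (hB w hw).2.1 hul (hB w hw).2.2
  have hsu := A.sideDist_eq_one_of_mem hl (ho u hu).1 (ho u hu).2.1 (ho u hu).2.2 hul hvl huv
  have hsv := A.sideDist_eq_one_of_mem hl (ho v hv).1 (ho v hv).2.1 (ho v hv).2.2 hvl hul huv.symm
  rw [sideDist_comm] at hsv
  calc 2 * (A.vertsBetween l u v).ncard + 2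
      = ∑ w ∈ S, sideDist (lineFun (o w)) u v := by
        rw [Finset.sum_insert huB, Finset.sum_insert hvB, Finset.sum_congr rfl hsB, hsu, hsv,
          Finset.sum_const, nsmul_eq_mul, Set.ncard_eq_toFinset_card _ hfin]
        ring
    _ = ∑ m ∈ S.image o, sideDist (lineFun m) u v :=
        (Finset.sum_image (f := fun m => sideDist (lineFun m) u v) hinj).symm
    _ ≤ A.separation u v := by
        refine Finset.sum_le_sum_of_subset_of_nonneg (fun m hm => ?_) fun _ _ _ => sideDist_nonneg _
        obtain ⟨w, hw, rfl⟩ := Finset.mem_image.1 hm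
        exact (ho w (hS w hw).1).1

lemma separation_add_two_le (hl : l ∈ A.lines) (hul : u ∈ l) (hvl : v ∈ l) (hzl : z ∉ l) :
    A.separation u v + 2 ≤ A.separation u z + A.separation z v := by
  have hf := fun p => A.mem_iff_lineFun_eq_zero (p := p) hl
  have hz : lineFun l z ≠ 0 := mt (hf z).2 hzl
  have hlz : sideDist (lineFun l) u v + 2 ≤
      sideDist (lineFun l) u z + sideDist (lineFun l) z v := by
    rw [sideDist_eq_one _ ((hf u).1 hul) hz, sideDist_comm (x := z),
      sideDist_eq_one _ ((hf v).1 hvl) hz]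
    simp [sideDist, (hf u).1 hul, (hf v).1 hvl]
  rw [separation, separation, separation, ← Finset.add_sum_erase _ _ hl,
    ← Finset.add_sum_erase _ _ hl, ← Finset.add_sum_erase _ _ hl]
  have := Finset.sum_le_sum fun m (_ : m ∈ A.lines.erase l) =>
    sideDist_triangle (lineFun m) (x := u) (y := z) (z := v)
  rw [Finset.sum_add_distrib] at this
  linarith

lemma ncard_vertsBetween_add_one_le_length (hl : l ∈ A.lines) (hu : u ∈ A.verts)
    (hv : v ∈ A.verts) (huv : u ≠ v) (hul : u ∈ l) (hvl : v ∈ l) (W : A.graph.Walk u v) :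
    (A.vertsBetween l u v).ncard + 1 ≤ W.length := by
  have h₁ := A.two_mul_ncard_add_two_le_separation hl hu hv huv hul hvl
  have h₂ := A.separation_le_two_mul_length W
  omega

lemma mem_of_mem_support_of_length_le (hl : l ∈ A.lines) (hu : u ∈ A.verts)
    (hv : v ∈ A.verts) (huv : u ≠ v) (hul : u ∈ l) (hvl : v ∈ l) {W : A.graph.Walk u v}
    (hW : W.length ≤ (A.vertsBetween l u v).ncard + 1) (hz : z ∈ W.support) : z ∈ l := by
  by_contra hzl
  obtain ⟨W₁, W₂, rfl⟩ := SimpleGraph.Walk.mem_support_iff_exists_append.1 hz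
  have h₁ := A.separation_add_two_le hl hul hvl hzl
  have h₂ := A.separation_le_two_mul_length W₁
  have h₃ := A.separation_le_two_mul_length W₂
  have h₄ := A.two_mul_ncard_add_two_le_separation hl hu hv huv hul hvl
  rw [SimpleGraph.Walk.length_append] at hW
  omega

lemma ncard_vertsBetween_add_ncard_vertsBetween_lt (hw : w ∈ A.vertsBetween l u v) :
    (A.vertsBetween l u w).ncard + (A.vertsBetween l w v).ncard <
      (A.vertsBetween l u v).ncard := by
  obtain ⟨hwV, hwl, huwv⟩ := hw
  have hdisj : Disjoint (A.vertsBetween l u w) (A.vertsBetween l w v) :=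
    Set.disjoint_left.2 fun z h₁ h₂ =>
      h₂.2.2.ne_left ((huwv.trans_left_right h₁.2.2).wbtw.swap_left_iff.1 h₂.2.2.wbtw)
  have hsub : insert w (A.vertsBetween l u w ∪ A.vertsBetween l w v) ⊆ A.vertsBetween l u v := by
    rintro z (rfl | ⟨hzV, hzl, h⟩ | ⟨hzV, hzl, h⟩)
    · exact ⟨hwV, hwl, huwv⟩
    · exact ⟨hzV, hzl, huwv.trans_left h⟩
    · exact ⟨hzV, hzl, huwv.trans_right h⟩
  have hw : w ∉ A.vertsBetween l u w ∪ A.vertsBetween l w v := by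
    rintro (h | h)
    exacts [h.2.2.ne_right rfl, h.2.2.ne_left rfl]
  calc (A.vertsBetween l u w).ncard + (A.vertsBetween l w v).ncard
      = (A.vertsBetween l u w ∪ A.vertsBetween l w v).ncard :=
        (Set.ncard_union_eq hdisj A.finite_vertsBetween A.finite_vertsBetween).symm
    _ < (insert w (A.vertsBetween l u w ∪ A.vertsBetween l w v)).ncard := by
        rw [Set.ncard_insert_of_notMem hw
          (A.finite_vertsBetween.union A.finite_vertsBetween)]
        omega
    _ ≤ (A.vertsBetween l u v).ncard := Set.ncard_le_ncard hsub A.finite_vertsBetween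

lemma exists_walk_length_le (hl : l ∈ A.lines) (hu : u ∈ A.verts) (hv : v ∈ A.verts)
    (huv : u ≠ v) (hul : u ∈ l) (hvl : v ∈ l) :
    ∃ W : A.graph.Walk u v, W.length ≤ (A.vertsBetween l u v).ncard + 1 := by
  induction hk : (A.vertsBetween l u v).ncard using Nat.strong_induction_on
    generalizing u v with
  | _ k ih =>
  obtain hB | ⟨w, hw⟩ := (A.vertsBetween l u v).eq_empty_or_nonempty
  · exact ⟨((A.adj_iff_vertsBetween_eq_empty hl hul hvl).2 ⟨huv, hu, hv, hB⟩).toWalk, by simp⟩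
  · have hlt := A.ncard_vertsBetween_add_ncard_vertsBetween_lt hw
    obtain ⟨hwV, hwl, huwv⟩ := hw
    obtain ⟨W₁, h₁⟩ := ih _ (by omega) hu hwV huwv.left_ne hul hwl rfl
    obtain ⟨W₂, h₂⟩ := ih _ (by omega) hwV hv huwv.ne_right hwl hvl rfl
    exact ⟨W₁.append W₂, by rw [SimpleGraph.Walk.length_append]; omega⟩

lemma dist_eq_ncard_vertsBetween_add_one (hl : l ∈ A.lines) (hu : u ∈ A.verts)
    (hv : v ∈ A.verts) (huv : u ≠ v) (hul : u ∈ l) (hvl : v ∈ l) :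
    A.graph.dist u v = (A.vertsBetween l u v).ncard + 1 := by
  obtain ⟨W, hW⟩ := A.exists_walk_length_le hl hu hv huv hul hvl
  obtain ⟨P, hP⟩ := W.reachable.exists_walk_length_eq_dist
  have := A.ncard_vertsBetween_add_one_le_length hl hu hv huv hul hvl P
  have := SimpleGraph.dist_le W
  omega

lemma wbtw_of_adj_of_dist_lt (hl : l ∈ A.lines) (hv : v ∈ A.verts) (hul : u ∈ l) (hpl : p ∈ l)
    (hvl : v ∈ l) (hup : A.graph.Adj u p) (hd : A.graph.dist p v < A.graph.dist u v) :
    Wbtw ℝ u p v := by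
  obtain rfl | hpv := eq_or_ne p v
  · exact wbtw_self_right ℝ u p
  have huv : u ≠ v := by
    rintro rfl
    simp at hd
  obtain ⟨-, hu, hp, hB⟩ := (A.adj_iff_vertsBetween_eq_empty hl hul hpl).1 hup
  rcases (A.isLine l hl).wbtw_or_wbtw_or_wbtw hul hpl hvl with h | h | h
  · exact h
  · have : v ∈ A.vertsBetween l u p :=
      ⟨hv, hvl, (show Sbtw ℝ p v u from ⟨h, hpv.symm, huv.symm⟩).symm⟩
    simp [hB] at this
  · -- `u` lies strictly between `p` and `v`, so `p` is farther from `v` than `u`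
    have hlt := A.ncard_vertsBetween_add_ncard_vertsBetween_lt
      (⟨hu, hul, (show Sbtw ℝ v u p from ⟨h, huv, hup.ne⟩).symm⟩ : u ∈ A.vertsBetween l p v)
    rw [A.dist_eq_ncard_vertsBetween_add_one hl hp hv hpv hpl hvl,
      A.dist_eq_ncard_vertsBetween_add_one hl hu hv huv hul hvl] at hd
    omega

lemma eq_of_adj_of_wbtw (hl : l ∈ A.lines) (hul : u ∈ l) (hpl : p ∈ l) (hql : q ∈ l)
    (hup : A.graph.Adj u p) (huq : A.graph.Adj u q) (hpv : Wbtw ℝ u p v)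
    (hqv : Wbtw ℝ u q v) : p = q := by
  by_contra hpq
  obtain ⟨-, -, hp, hBp⟩ := (A.adj_iff_vertsBetween_eq_empty hl hul hpl).1 hup
  obtain ⟨-, -, hq, hBq⟩ := (A.adj_iff_vertsBetween_eq_empty hl hul hql).1 huq
  rcases (A.isLine l hl).wbtw_or_wbtw_or_wbtw hul hpl hql with h | h | h
  · have : p ∈ A.vertsBetween l u q := ⟨hp, hpl, h, hup.ne.symm, hpq⟩
    simp [hBq] at this
  · have : q ∈ A.vertsBetween l u p :=
      ⟨hq, hql, (show Sbtw ℝ p q u from ⟨h, Ne.symm hpq, huq.ne.symm⟩).symm⟩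
    simp [hBp] at this
  · exact huq.ne ((h.trans_expand_left hpv hup.ne).swap_left_iff.1 hqv).symm

lemma eq_of_length_eq_dist (hl : l ∈ A.lines) (hv : v ∈ A.verts) (hvl : v ∈ l) (hul : u ∈ l)
    (P Q : A.graph.Walk u v) (hP : P.length = A.graph.dist u v)
    (hQ : Q.length = A.graph.dist u v) : P = Q := by
  induction P with
  | nil =>
    rw [SimpleGraph.dist_self] at hQ
    exact (SimpleGraph.Walk.eq_nil_iff_nil.2 (SimpleGraph.Walk.length_eq_zero_iff.1 hQ)).symm
  | @cons u p v hup P ih =>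
    cases Q with
    | nil => simp at hP
    | @cons _ q _ huq Q =>
      have huv : u ≠ v := by
        rintro rfl
        simp at hP
      have hd := A.dist_eq_ncard_vertsBetween_add_one hl hup.2.1 hv huv hul hvl
      have hP' := SimpleGraph.length_eq_dist_of_subwalk hP (P.isSubwalk_cons hup)
      have hQ' := SimpleGraph.length_eq_dist_of_subwalk hQ (Q.isSubwalk_cons huq)
      have hpl := A.mem_of_mem_support_of_length_le hl hup.2.1 hv huv hul hvl (hP.trans hd).le
        (z := p) (by simp)
      have hql := A.mem_of_mem_support_of_length_le hl hup.2.1 hv huv hul hvl (hQ.trans hd).le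
        (z := q) (by simp)
      have hpv := A.wbtw_of_adj_of_dist_lt hl hv hul hpl hvl hup
        (by rw [← hP', ← hP, SimpleGraph.Walk.length_cons]; omega)
      have hqv := A.wbtw_of_adj_of_dist_lt hl hv hul hql hvl huq
        (by rw [← hQ', ← hQ, SimpleGraph.Walk.length_cons]; omega)
      obtain rfl := A.eq_of_adj_of_wbtw hl hul hpl hql hup huq hpv hqv
      rw [ih hv hvl hpl Q hP' hQ']

end SimpleLineArrangement

theorem shortest_path_on_common_line_general (n : ℕ) (A : SimpleLineArrangement n)
    (u v : ℝ × ℝ) (hu : u ∈ A.verts) (hv : v ∈ A.verts) (huv : u ≠ v)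
    (l : Set (ℝ × ℝ)) (hl : l ∈ A.lines) (hul : u ∈ l) (hvl : v ∈ l) :
    (∃! P : A.graph.Walk u v, P.IsPath ∧ P.length = A.graph.dist u v) ∧
    ∀ P : A.graph.Walk u v, P.IsPath → P.length = A.graph.dist u v →
      (∀ w ∈ P.support, w ∈ l) ∧
      P.length = 1 + {w | w ∈ A.verts ∧ w ∈ l ∧ Sbtw ℝ u w v}.ncard := by
  have hd := A.dist_eq_ncard_vertsBetween_add_one hl hu hv huv hul hvl
  obtain ⟨P, hP, hPd⟩ :=
    (SimpleGraph.Reachable.of_dist_ne_zero (by omega : A.graph.dist u v ≠ 0)).exists_path_of_dist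
  refine ⟨⟨P, ⟨hP, hPd⟩, fun Q hQ => A.eq_of_length_eq_dist hl hv hvl hul Q P hQ.2 hPd⟩,
    fun Q _ hQ => ⟨fun w hw => ?_, hQ.trans (hd.trans (add_comm _ _))⟩⟩
  exact A.mem_of_mem_support_of_length_le hl hu hv huv hul hvl (hQ.trans hd).le hw

theorem shortest_path_on_common_line (n : ℕ) (hn : 3 ≤ n) (A : SimpleLineArrangement n)
    (u v : ℝ × ℝ) (hu : u ∈ A.verts) (hv : v ∈ A.verts) (huv : u ≠ v)
    (l : Set (ℝ × ℝ)) (hl : l ∈ A.lines) (hul : u ∈ l) (hvl : v ∈ l) :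
    (∃! P : A.graph.Walk u v, P.IsPath ∧ P.length = A.graph.dist u v) ∧
    ∀ P : A.graph.Walk u v, P.IsPath → P.length = A.graph.dist u v →
      (∀ w ∈ P.support, w ∈ l) ∧
      P.length = 1 + {w | w ∈ A.verts ∧ w ∈ l ∧ Sbtw ℝ u w v}.ncard :=
  shortest_path_on_common_line_general n A u v hu hv huv l hl hul hvl
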